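/- Boosting for maximum distributional complexity (Schapire-style): for every success probability γ ∈ [1/2, 1] and every (possibly partial) Boolean-valued function f : X → {0,1} with X ⊆ {0,1}^m, the maximum distributional query complexity with the success-probability score satisfies R̄̄_{3γ²−2γ³}(f) ≤ 4·R̄̄_γ(f). -/

import Mathlib

open Finset

/-- Deterministic decision trees querying coordinates `i : ι` of inputs `x : ι → Bool`,
with leaves labelled by elements of `L`. -/
inductive DTree (ι : Type) (L : Type) : Type
  | leaf (lab : L) : DTree ι L
  | node (i : ι) (t0 : DTree ι L) (t1 : DTree ι L) : DTree ι L

namespace DTree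

variable {ι L : Type}

/-- Output label at the leaf reached by input `x`. -/
def out : DTree ι L → (ι → Bool) → L
  | .leaf lab, _ => lab
  | .node i t0 t1, x => if x i then out t1 x else out t0 x

/-- Number of queries made on input `x` (depth of the leaf reached by `x`). -/
def cost : DTree ι L → (ι → Bool) → ℕ
  | .leaf _, _ => 0
  | .node i t0 t1, x => (if x i then cost t1 x else cost t0 x) + 1

/-- Maximum leaf depth of the tree. -/
def depth : DTree ι L → ℕ
  | .leaf _ => 0
  | .node _ t0 t1 => max (depth t0) (depth t1) + 1

/-- The set of inputs reaching the same leaf as input `x`. -/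
def leafSet : DTree ι L → (ι → Bool) → Set (ι → Bool)
  | .leaf _, _ => Set.univ
  | .node i t0 t1, x => {y | y i = x i} ∩ (if x i then leafSet t1 x else leafSet t0 x)

/-- Every leaf label of the tree satisfies the predicate `P`. -/
def allLabels : DTree ι L → (L → Prop) → Prop
  | .leaf lab, P => P lab
  | .node _ t0 t1, P => allLabels t0 P ∧ allLabels t1 P

end DTree

/-- A randomized query algorithm: a finitely supported probability distribution over
deterministic decision trees. -/
structure RandAlg (ι : Type) (L : Type) where
  k : ℕ
  p : Fin k → ℝ
  T : Fin k → DTree ι L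
  p_nonneg : ∀ j, 0 ≤ p j
  p_sum : ∑ j, p j = 1

/-- A probability distribution on inputs, supported inside the domain `X`. -/
structure InputDist (ι : Type) [Fintype ι] [DecidableEq ι] (X : Set (ι → Bool)) where
  μ : (ι → Bool) → ℝ
  nonneg : ∀ x, 0 ≤ μ x
  sum_one : ∑ x, μ x = 1
  supp : ∀ x, x ∉ X → μ x = 0

/-- A score function `φ : [0,1] → [1/2,1]`. -/
structure ScoreFun where
  φ : ℝ → ℝ
  continuous : ContinuousOn φ (Set.Icc 0 1)
  half_le : ∀ p ∈ Set.Icc (0:ℝ) 1, 1 / 2 ≤ φ p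
  le_one : ∀ p ∈ Set.Icc (0:ℝ) 1, φ p ≤ 1
  map_zero : φ 0 = 1
  map_one : φ 1 = 1
  map_half : φ (1 / 2) = 1 / 2
  symm : ∀ p ∈ Set.Icc (0:ℝ) 1, φ (1 - p) = φ p
  mono : MonotoneOn φ (Set.Icc (1 / 2) 1)

section Defs

variable {ι L : Type} [Fintype ι] [DecidableEq ι]

/-- Mass of a set of inputs under the weight function `μ`. -/
noncomputable def mass (μ : (ι → Bool) → ℝ) (S : Set (ι → Bool)) : ℝ :=
  ∑ x, Set.indicator S μ x

/-- Score `φ(μ(ℓ₁)/μ(ℓ))` of the leaf `ℓ` reached by `x` in the tree `t`. -/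
noncomputable def leafScore (S : ScoreFun) (f : (ι → Bool) → Bool) (μ : (ι → Bool) → ℝ)
    (t : DTree ι L) (x : ι → Bool) : ℝ :=
  S.φ (mass μ (t.leafSet x ∩ {y | f y = true}) / mass μ (t.leafSet x))

/-- Score of a randomized algorithm: `E_{D∼R, x∼μ}[score(D(x))]`. -/
noncomputable def algScore (S : ScoreFun) (f : (ι → Bool) → Bool) (μ : (ι → Bool) → ℝ)
    (R : RandAlg ι L) : ℝ :=
  ∑ j, R.p j * ∑ x, μ x * leafScore S f μ (R.T j) x

/-- Expected cost `E_{D∼R, x∼μ}[cost(D(x))]`. -/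
noncomputable def expCost (μ : (ι → Bool) → ℝ) (R : RandAlg ι L) : ℝ :=
  ∑ j, R.p j * ∑ x, μ x * ((R.T j).cost x : ℝ)

/-- Score-weighted cost `E[score(D(x))·cost(D(x))] / E[score(D(x))]`. -/
noncomputable def scost (S : ScoreFun) (f : (ι → Bool) → Bool) (μ : (ι → Bool) → ℝ)
    (R : RandAlg ι L) : ℝ :=
  (∑ j, R.p j * ∑ x, μ x * (leafScore S f μ (R.T j) x * ((R.T j).cost x : ℝ))) /
    algScore S f μ R

/-- Discounted score `E[score(D(x))·e^{-α·cost(D(x))}]`. -/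
noncomputable def dScore (S : ScoreFun) (f : (ι → Bool) → Bool) (μ : (ι → Bool) → ℝ)
    (α : ℝ) (R : RandAlg ι L) : ℝ :=
  ∑ j, R.p j * ∑ x, μ x *
    (leafScore S f μ (R.T j) x * Real.exp (-(α * ((R.T j).cost x : ℝ))))

/-- Maximum discounted score `DS_α^μ(f)`. -/
noncomputable def DS (S : ScoreFun) (f : (ι → Bool) → Bool) (μ : (ι → Bool) → ℝ)
    (α : ℝ) : ℝ :=
  ⨆ R : RandAlg ι Unit, dScore S f μ α R

/-- Distributional score-weighted query complexity `sR̄̄_γ^μ(f)`. -/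
noncomputable def sRdist (S : ScoreFun) (f : (ι → Bool) → Bool) (μ : (ι → Bool) → ℝ)
    (γ : ℝ) : ℝ :=
  sInf {c | ∃ R : RandAlg ι Unit, γ ≤ algScore S f μ R ∧ scost S f μ R = c}

/-- Distributional query complexity `R̄̄_γ^μ(f)` (expected cost). -/
noncomputable def Rdist (S : ScoreFun) (f : (ι → Bool) → Bool) (μ : (ι → Bool) → ℝ)
    (γ : ℝ) : ℝ :=
  sInf {c | ∃ R : RandAlg ι Unit, γ ≤ algScore S f μ R ∧ expCost μ R = c}

/-- Maximum score-weighted distributional query complexity `sR̄̄_γ(f)`. -/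
noncomputable def sRmax (S : ScoreFun) (X : Set (ι → Bool)) (f : (ι → Bool) → Bool)
    (γ : ℝ) : ℝ :=
  ⨆ μ : InputDist ι X, sRdist S f μ.μ γ

/-- Maximum distributional query complexity `R̄̄_γ(f)`. -/
noncomputable def Rmax (S : ScoreFun) (X : Set (ι → Bool)) (f : (ι → Bool) → Bool)
    (γ : ℝ) : ℝ :=
  ⨆ μ : InputDist ι X, Rdist S f μ.μ γ

/-- Success-probability score `max{μ(ℓ₀),μ(ℓ₁)}/μ(ℓ)` of the leaf reached by `x`. -/
noncomputable def succLeafScore (f : (ι → Bool) → Bool) (μ : (ι → Bool) → ℝ)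
    (t : DTree ι L) (x : ι → Bool) : ℝ :=
  max (mass μ (t.leafSet x ∩ {y | f y = false})) (mass μ (t.leafSet x ∩ {y | f y = true})) /
    mass μ (t.leafSet x)

/-- Success-probability score of a randomized algorithm. -/
noncomputable def succAlgScore (f : (ι → Bool) → Bool) (μ : (ι → Bool) → ℝ)
    (R : RandAlg ι L) : ℝ :=
  ∑ j, R.p j * ∑ x, μ x * succLeafScore f μ (R.T j) x

/-- Distributional query complexity with the success-probability score. -/
noncomputable def succRdist (f : (ι → Bool) → Bool) (μ : (ι → Bool) → ℝ) (γ : ℝ) : ℝ :=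
  sInf {c | ∃ R : RandAlg ι Unit, γ ≤ succAlgScore f μ R ∧ expCost μ R = c}

/-- Maximum distributional query complexity `R̄̄_γ(f)` with the success-probability score. -/
noncomputable def succRmax (X : Set (ι → Bool)) (f : (ι → Bool) → Bool) (γ : ℝ) : ℝ :=
  ⨆ μ : InputDist ι X, succRdist f μ.μ γ

/-- The fraction `q = μ(ℓ₁)/μ(ℓ)` at the leaf reached by `x`. -/
noncomputable def leafBias (f : (ι → Bool) → Bool) (μ : (ι → Bool) → ℝ)
    (t : DTree ι L) (x : ι → Bool) : ℝ :=
  mass μ (t.leafSet x ∩ {y | f y = true}) / mass μ (t.leafSet x)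

/-- Hellinger loss `E[2·√(q(1-q))]` of a randomized algorithm. -/
noncomputable def helLossAlg (f : (ι → Bool) → Bool) (μ : (ι → Bool) → ℝ)
    (R : RandAlg ι L) : ℝ :=
  ∑ j, R.p j * ∑ x, μ x *
    (2 * Real.sqrt (leafBias f μ (R.T j) x * (1 - leafBias f μ (R.T j) x)))

/-- Hellinger score `E[1 - √(q(1-q))]` of a randomized algorithm. -/
noncomputable def helScoreAlg (f : (ι → Bool) → Bool) (μ : (ι → Bool) → ℝ)
    (R : RandAlg ι L) : ℝ :=
  ∑ j, R.p j * ∑ x, μ x *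
    (1 - Real.sqrt (leafBias f μ (R.T j) x * (1 - leafBias f μ (R.T j) x)))

/-- `R̄̄_{Hel↓,ε}(f)`: maximum distributional complexity at Hellinger loss `ε`. -/
noncomputable def RmaxHelLoss (X : Set (ι → Bool)) (f : (ι → Bool) → Bool) (ε : ℝ) : ℝ :=
  ⨆ μ : InputDist ι X,
    sInf {c | ∃ R : RandAlg ι Unit, helLossAlg f μ.μ R ≤ ε ∧ expCost μ.μ R = c}

/-- `R̄̄_{Hel,γ}(f)`: maximum distributional complexity at Hellinger score `γ`. -/
noncomputable def RmaxHel (X : Set (ι → Bool)) (f : (ι → Bool) → Bool) (γ : ℝ) : ℝ :=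
  ⨆ μ : InputDist ι X,
    sInf {c | ∃ R : RandAlg ι Unit, γ ≤ helScoreAlg f μ.μ R ∧ expCost μ.μ R = c}

/-- Binary entropy function. -/
noncomputable def binEnt (p : ℝ) : ℝ :=
  -(p * Real.logb 2 p) - (1 - p) * Real.logb 2 (1 - p)

/-- Exponential-entropy score `E[1 - (1/2)·2^{-h(q)}]` of a randomized algorithm. -/
noncomputable def entScoreAlg (f : (ι → Bool) → Bool) (μ : (ι → Bool) → ℝ)
    (R : RandAlg ι L) : ℝ :=
  ∑ j, R.p j * ∑ x, μ x *
    (1 - (1 / 2) * (2:ℝ) ^ (-(binEnt (leafBias f μ (R.T j) x))))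

/-- `R̄̄_{Ent,γ}(f)`: maximum distributional complexity at exponential-entropy score `γ`. -/
noncomputable def RmaxEnt (X : Set (ι → Bool)) (f : (ι → Bool) → Bool) (γ : ℝ) : ℝ :=
  ⨆ μ : InputDist ι X,
    sInf {c | ∃ R : RandAlg ι Unit, γ ≤ entScoreAlg f μ.μ R ∧ expCost μ.μ R = c}

end Defs

section WorstCase

variable {ι L : Type}

open Classical in
/-- Worst-case randomized query complexity for a generic task: minimum, over randomized
algorithms whose leaf labels satisfy `labelOK` and which on every input `x ∈ X` output a
label `z` with `good x z` with probability at least `δ`, of the maximum leaf depth over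
the trees in the support. -/
noncomputable def RwcTask (X : Set (ι → Bool)) (good : (ι → Bool) → L → Prop)
    (labelOK : L → Prop) (δ : ℝ) : ℕ :=
  sInf {d : ℕ | ∃ R : RandAlg ι L,
    (∀ j, R.p j ≠ 0 → (R.T j).allLabels labelOK) ∧
    (∀ x ∈ X, δ ≤ ∑ j, if good x ((R.T j).out x) then R.p j else 0) ∧
    ∀ j, R.p j ≠ 0 → (R.T j).depth ≤ d}

/-- Worst-case randomized query complexity `R_δ(f)` of a (partial) Boolean function. -/
noncomputable def Rwc (X : Set (ι → Bool)) (f : (ι → Bool) → Bool) (δ : ℝ) : ℕ :=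
  RwcTask X (fun x b => b = f x) (fun _ : Bool => True) δ

end WorstCase

section Product

variable {m n : ℕ} {L : Type}

/-- The `i`-th block of an input to the `n`-fold direct product. -/
def block (x : Fin n × Fin m → Bool) (i : Fin n) : Fin m → Bool := fun j => x (i, j)

/-- The product domain `Xⁿ`. -/
def Xpow (n : ℕ) (X : Set (Fin m → Bool)) : Set (Fin n × Fin m → Bool) :=
  {x | ∀ i, block x i ∈ X}

/-- The `n`-fold direct product `fⁿ`. -/
def fpow (f : (Fin m → Bool) → Bool) (x : Fin n × Fin m → Bool) : Fin n → Bool :=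
  fun i => f (block x i)

/-- The product distribution `μⁿ`. -/
noncomputable def prodMu (μ : (Fin m → Bool) → ℝ) (x : Fin n × Fin m → Bool) : ℝ :=
  ∏ i, μ (block x i)

/-- The `i`-th factor `ℓ^(i)` of the (product) leaf reached by `x` in a decision tree for `fⁿ`. -/
def blockSet (t : DTree (Fin n × Fin m) L) (x : Fin n × Fin m → Bool) (i : Fin n) :
    Set (Fin m → Bool) :=
  {y | (fun q : Fin n × Fin m => if q.1 = i then y q.2 else x q) ∈ t.leafSet x}

/-- Score of a leaf of a tree for `fⁿ` under `μⁿ`: the product of the scores of its factors. -/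
noncomputable def prodLeafScore (S : ScoreFun) (f : (Fin m → Bool) → Bool)
    (μ : (Fin m → Bool) → ℝ) (t : DTree (Fin n × Fin m) L) (x : Fin n × Fin m → Bool) : ℝ :=
  ∏ i, S.φ (mass μ (blockSet t x i ∩ {y | f y = true}) / mass μ (blockSet t x i))

/-- Score of a randomized algorithm for `fⁿ` under `μⁿ`. -/
noncomputable def algScoreN (S : ScoreFun) (f : (Fin m → Bool) → Bool)
    (μ : (Fin m → Bool) → ℝ) (R : RandAlg (Fin n × Fin m) L) : ℝ :=
  ∑ j, R.p j * ∑ x, prodMu μ x * prodLeafScore S f μ (R.T j) x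

/-- Score-weighted cost of a randomized algorithm for `fⁿ` under `μⁿ`. -/
noncomputable def scostN (S : ScoreFun) (f : (Fin m → Bool) → Bool)
    (μ : (Fin m → Bool) → ℝ) (R : RandAlg (Fin n × Fin m) L) : ℝ :=
  (∑ j, R.p j * ∑ x, prodMu μ x * (prodLeafScore S f μ (R.T j) x * ((R.T j).cost x : ℝ))) /
    algScoreN S f μ R

/-- Discounted score of a randomized algorithm for `fⁿ` under `μⁿ`. -/
noncomputable def dScoreN (S : ScoreFun) (f : (Fin m → Bool) → Bool)
    (μ : (Fin m → Bool) → ℝ) (α : ℝ) (R : RandAlg (Fin n × Fin m) L) : ℝ :=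
  ∑ j, R.p j * ∑ x, prodMu μ x *
    (prodLeafScore S f μ (R.T j) x * Real.exp (-(α * ((R.T j).cost x : ℝ))))

/-- Maximum discounted score `DS_α^{μⁿ}(fⁿ)`. -/
noncomputable def DSN (S : ScoreFun) (f : (Fin m → Bool) → Bool)
    (μ : (Fin m → Bool) → ℝ) (α : ℝ) (n : ℕ) : ℝ :=
  ⨆ R : RandAlg (Fin n × Fin m) Unit, dScoreN S f μ α R

/-- Distributional score-weighted query complexity `sR̄̄_γ^{μⁿ}(fⁿ)`. -/
noncomputable def sRdistN (S : ScoreFun) (f : (Fin m → Bool) → Bool)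
    (μ : (Fin m → Bool) → ℝ) (γ : ℝ) (n : ℕ) : ℝ :=
  sInf {c | ∃ R : RandAlg (Fin n × Fin m) Unit,
    γ ≤ algScoreN S f μ R ∧ scostN S f μ R = c}

/-- Worst-case randomized query complexity `R_δ(fⁿ)` of computing `fⁿ` exactly. -/
noncomputable def RwcN (X : Set (Fin m → Bool)) (f : (Fin m → Bool) → Bool)
    (n : ℕ) (δ : ℝ) : ℕ :=
  RwcTask (Xpow n X) (fun x z => z = fpow f x) (fun _ : Fin n → Bool => True) δ

/-- Success-probability score `max_z μ(ℓ ∩ (fⁿ)⁻¹(z))/μ(ℓ)` of a leaf of a tree for `fⁿ`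
under an arbitrary distribution `μ` on `Xⁿ`. -/
noncomputable def succLeafScoreN (f : (Fin m → Bool) → Bool)
    (μ : (Fin n × Fin m → Bool) → ℝ) (t : DTree (Fin n × Fin m) L)
    (x : Fin n × Fin m → Bool) : ℝ :=
  (⨆ z : Fin n → Bool, mass μ (t.leafSet x ∩ {y | fpow f y = z})) / mass μ (t.leafSet x)

/-- Success-probability score of a randomized algorithm for `fⁿ`. -/
noncomputable def succAlgScoreN (f : (Fin m → Bool) → Bool)
    (μ : (Fin n × Fin m → Bool) → ℝ) (R : RandAlg (Fin n × Fin m) L) : ℝ :=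
  ∑ j, R.p j * ∑ x, μ x * succLeafScoreN f μ (R.T j) x

/-- Score-weighted cost of a randomized algorithm for `fⁿ` (success-probability score). -/
noncomputable def succScostN (f : (Fin m → Bool) → Bool)
    (μ : (Fin n × Fin m → Bool) → ℝ) (R : RandAlg (Fin n × Fin m) L) : ℝ :=
  (∑ j, R.p j * ∑ x, μ x * (succLeafScoreN f μ (R.T j) x * ((R.T j).cost x : ℝ))) /
    succAlgScoreN f μ R

/-- Maximum score-weighted distributional query complexity `sR̄̄_δ(fⁿ)`
(success-probability score). -/
noncomputable def succSRmaxN (X : Set (Fin m → Bool)) (f : (Fin m → Bool) → Bool)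
    (n : ℕ) (δ : ℝ) : ℝ :=
  ⨆ μ : InputDist (Fin n × Fin m) (Xpow n X),
    sInf {c | ∃ R : RandAlg (Fin n × Fin m) Unit,
      δ ≤ succAlgScoreN f μ.μ R ∧ succScostN f μ.μ R = c}

/-- Worst-case randomized query complexity of the list-decoding task `LD_ℓⁿ ∘ f`. -/
noncomputable def RwcLD (X : Set (Fin m → Bool)) (f : (Fin m → Bool) → Bool)
    (n ℓ : ℕ) (δ : ℝ) : ℕ :=
  RwcTask (Xpow n X) (fun x S => fpow f x ∈ S)
    (fun S : Finset (Fin n → Bool) => S.card = 2 ^ (n - ℓ)) δ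

open Classical in
/-- Worst-case randomized query complexity of the threshold task `Thr_kⁿ ∘ f`. -/
noncomputable def RwcThr (X : Set (Fin m → Bool)) (f : (Fin m → Bool) → Bool)
    (n k : ℕ) (δ : ℝ) : ℕ :=
  RwcTask (Xpow n X)
    (fun x z => k ≤ (Finset.univ.filter fun i => z i = fpow f x i).card)
    (fun _ : Fin n → Bool => True) δ

open Classical in
/-- Worst-case randomized query complexity of the labelled threshold task `Label_kⁿ ∘ f`. -/
noncomputable def RwcLabel (X : Set (Fin m → Bool)) (f : (Fin m → Bool) → Bool)
    (n k : ℕ) (δ : ℝ) : ℕ :=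
  RwcTask (Xpow n X)
    (fun x z => ∀ i b, z i = some b → fpow f x i = b)
    (fun z : Fin n → Option Bool =>
      (Finset.univ.filter fun i => (z i).isSome).card = k) δ

end Product

/-! Schapire's boosting by a majority of three. Let `R₁` have score `γ` against `μ`, with hit
probability `h₁(x)` and error `β`. Reweight `μ` so that the inputs where `R₁` is right and those
where it errs get mass `1/2` each, and let `R₂` have score `γ` against this distribution; its
density is at least `1/2`, so `R₂` costs at most twice as much against `μ`. Finally run `R₃`,
which has score `γ` against `μ` conditioned on the inputs where the optimal labels of the trees
drawn from `R₁` and `R₂` disagree, only on those inputs, and output the majority. The score is at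
least `E[h₁h₂] + γ·P[disagree]`, which the balance condition on `R₂` forces to be at least
`3γ² - 2γ³`; if each stage costs at most `B` against its own distribution, the vote costs at most
`B + 2B + B` against `μ`.

Scores are handled through the optimal labelling of the leaves: the success-probability score of a
tree is the accuracy of that labelling, and no labelling constant on leaves does better. -/

namespace DTree

variable {ι L L' : Type}

theorem mem_leafSet_self (t : DTree ι L) (x : ι → Bool) : x ∈ t.leafSet x := by
  induction t with
  | leaf => trivial
  | node i t₀ t₁ ih₀ ih₁ => exact ⟨rfl, by cases x i <;> assumption⟩

theorem leafSet_eq_of_mem {t : DTree ι L} {x y : ι → Bool} (h : y ∈ t.leafSet x) :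
    t.leafSet y = t.leafSet x := by
  induction t with
  | leaf => rfl
  | node i t₀ t₁ ih₀ ih₁ =>
    obtain ⟨hi : y i = x i, h⟩ := h
    simp only [leafSet, hi]
    cases hx : x i <;> simp only [hx, Bool.false_eq_true, if_true, if_false] at h ⊢
    · rw [ih₀ h]
    · rw [ih₁ h]

theorem mem_leafSet_comm {t : DTree ι L} {x y : ι → Bool} :
    y ∈ t.leafSet x ↔ x ∈ t.leafSet y :=
  ⟨fun h => leafSet_eq_of_mem h ▸ t.mem_leafSet_self x,
    fun h => leafSet_eq_of_mem h ▸ t.mem_leafSet_self y⟩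

def queryAll : List ι → DTree ι Unit
  | [] => .leaf ()
  | i :: l => .node i (queryAll l) (queryAll l)

theorem cost_queryAll (l : List ι) (x : ι → Bool) : (queryAll l).cost x = l.length := by
  induction l with
  | nil => rfl
  | cons i l ih => simp [queryAll, cost, ih]

theorem leafSet_queryAll (l : List ι) (x : ι → Bool) :
    (queryAll l).leafSet x = {y | ∀ i ∈ l, y i = x i} := by
  induction l with
  | nil => simp [queryAll, leafSet]
  | cons i l ih =>
    ext y
    simp [queryAll, leafSet, ih]

variable [DecidableEq ι]

theorem update_mem_leafSet {t : DTree ι L} {x y : ι → Bool} (i : ι) (h : y ∈ t.leafSet x) :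
    Function.update y i (x i) ∈ t.leafSet x := by
  induction t with
  | leaf => trivial
  | node j t₀ t₁ ih₀ ih₁ =>
    obtain ⟨hj, h⟩ := h
    refine ⟨?_, by cases hx : x j <;> simp only [hx] at h ⊢ <;> simp_all⟩
    rcases eq_or_ne j i with rfl | hji
    · simp
    · simpa [Function.update_of_ne hji] using hj

/-- Run `t` and continue at each of its leaves with the tree `g` assigns to that leaf. The
continuation is evaluated at a representative of the leaf: the point whose coordinates queried on
the path are the answers given there, all others being `false`. -/
def graft : DTree ι L → ((ι → Bool) → DTree ι L') → DTree ι L'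
  | .leaf _, g => g fun _ => false
  | .node i t₀ t₁, g =>
      .node i (graft t₀ fun y => g (Function.update y i false))
        (graft t₁ fun y => g (Function.update y i true))

theorem graft_spec {t : DTree ι L} {g : (ι → Bool) → DTree ι L'} {x : ι → Bool}
    (hg : ∀ y ∈ t.leafSet x, g y = g x) :
    (t.graft g).cost x = t.cost x + (g x).cost x ∧
      (t.graft g).leafSet x = t.leafSet x ∩ (g x).leafSet x := by
  induction t generalizing g with
  | leaf =>
    simp only [graft, cost, leafSet, hg _ trivial]
    simp
  | node i t₀ t₁ ih₀ ih₁ =>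
    have hgx (b : Bool) (hb : x i = b) : g (Function.update x i b) = g x := by
      rw [← hb, Function.update_eq_self]
    cases hb : x i
    · obtain ⟨hc, hl⟩ := ih₀ (g := fun y => g (Function.update y i false)) fun y hy =>
        (hg _ ⟨by simp [hb], by simpa [hb] using update_mem_leafSet (x := x) i hy⟩).trans
          (hgx false hb).symm
      simp only [hgx false hb] at hc hl
      simp only [graft, cost, leafSet, hb, hc, hl, Bool.false_eq_true, if_false]
      refine ⟨by omega, by simp [Set.inter_assoc]⟩
    · obtain ⟨hc, hl⟩ := ih₁ (g := fun y => g (Function.update y i true)) fun y hy =>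
        (hg _ ⟨by simp [hb], by simpa [hb] using update_mem_leafSet (x := x) i hy⟩).trans
          (hgx true hb).symm
      simp only [hgx true hb] at hc hl
      simp only [graft, cost, leafSet, hb, hc, hl, if_true]
      refine ⟨by omega, by simp [Set.inter_assoc]⟩

def thenIf (t₁ t₂ t₃ : DTree ι Unit) (D : (ι → Bool) → Bool) : DTree ι Unit :=
  (t₁.graft fun _ => t₂).graft fun y => if D y then t₃ else .leaf ()

theorem thenIf_spec {t₁ t₂ t₃ : DTree ι Unit} {D : (ι → Bool) → Bool} {x : ι → Bool}
    (hD : ∀ y ∈ t₁.leafSet x ∩ t₂.leafSet x, D y = D x) :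
    (thenIf t₁ t₂ t₃ D).cost x = t₁.cost x + t₂.cost x + (if D x then t₃.cost x else 0) ∧
      (thenIf t₁ t₂ t₃ D).leafSet x =
        t₁.leafSet x ∩ t₂.leafSet x ∩ (if D x then t₃.leafSet x else Set.univ) := by
  obtain ⟨hc₁, hl₁⟩ := graft_spec (t := t₁) (g := fun _ => t₂) (x := x) fun _ _ => rfl
  obtain ⟨hc, hl⟩ := graft_spec (t := t₁.graft fun _ => t₂)
    (g := fun y => if D y then t₃ else .leaf ()) (x := x) fun y hy => by
      rw [hD y (hl₁ ▸ hy)]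
  unfold thenIf
  rw [hc, hl, hc₁, hl₁]
  cases D x <;> simp [cost, leafSet]

end DTree

namespace RandAlg

variable {ι L L' : Type}

noncomputable def expect (R : RandAlg ι L) (F : DTree ι L → ℝ) : ℝ :=
  ∑ j, R.p j * F (R.T j)

def pure (t : DTree ι L) : RandAlg ι L where
  k := 1
  p _ := 1
  T _ := t
  p_nonneg _ := zero_le_one
  p_sum := by simp

/-- Draw `D ∼ R`, then run a tree drawn from `S D`. -/
def bind (R : RandAlg ι L) (S : DTree ι L → RandAlg ι L') : RandAlg ι L' where
  k := ∑ j, (S (R.T j)).k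
  p q := R.p (finSigmaFinEquiv.symm q).1 * (S (R.T _)).p (finSigmaFinEquiv.symm q).2
  T q := (S (R.T _)).T (finSigmaFinEquiv.symm q).2
  p_nonneg q := mul_nonneg (R.p_nonneg _) ((S _).p_nonneg _)
  p_sum := by
    refine (Equiv.sum_comp finSigmaFinEquiv.symm
      fun q : (j : Fin R.k) × Fin (S (R.T j)).k => R.p q.1 * (S (R.T q.1)).p q.2).trans ?_
    simp [Fintype.sum_sigma, ← Finset.mul_sum, RandAlg.p_sum]

@[simp]
theorem expect_pure (t : DTree ι L) (F : DTree ι L → ℝ) : (pure t).expect F = F t := by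
  show ∑ _ : Fin 1, 1 * F t = F t
  simp

@[simp]
theorem expect_bind (R : RandAlg ι L) (S : DTree ι L → RandAlg ι L') (F : DTree ι L' → ℝ) :
    (R.bind S).expect F = R.expect fun t => (S t).expect F := by
  refine (Equiv.sum_comp finSigmaFinEquiv.symm
    fun q : (j : Fin R.k) × Fin (S (R.T j)).k =>
      R.p q.1 * (S (R.T q.1)).p q.2 * F ((S (R.T q.1)).T q.2)).trans ?_
  simp [expect, Fintype.sum_sigma, Finset.mul_sum, mul_assoc]

variable (R : RandAlg ι L)

@[simp]
theorem expect_const (c : ℝ) : R.expect (fun _ => c) = c := by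
  simp [expect, ← Finset.sum_mul, R.p_sum]

@[simp]
theorem expect_add (F G : DTree ι L → ℝ) :
    R.expect (fun t => F t + G t) = R.expect F + R.expect G := by
  simp [expect, mul_add, Finset.sum_add_distrib]

@[simp]
theorem expect_sub (F G : DTree ι L → ℝ) :
    R.expect (fun t => F t - G t) = R.expect F - R.expect G := by
  simp [expect, mul_sub, Finset.sum_sub_distrib]

@[simp]
theorem expect_const_mul (c : ℝ) (F : DTree ι L → ℝ) :
    R.expect (fun t => c * F t) = c * R.expect F := by
  simp [expect, Finset.mul_sum, mul_left_comm]

@[simp]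
theorem expect_mul_const (c : ℝ) (F : DTree ι L → ℝ) :
    R.expect (fun t => F t * c) = R.expect F * c := by
  simp [expect, Finset.sum_mul, mul_assoc]

theorem expect_mono {F G : DTree ι L → ℝ} (h : ∀ t, F t ≤ G t) : R.expect F ≤ R.expect G :=
  Finset.sum_le_sum fun j _ => mul_le_mul_of_nonneg_left (h _) (R.p_nonneg j)

theorem expect_nonneg {F : DTree ι L → ℝ} (h : ∀ t, 0 ≤ F t) : 0 ≤ R.expect F := by
  simpa using R.expect_mono h

theorem expect_sum_mul {α : Type} [Fintype α] (w : α → ℝ) (F : DTree ι L → α → ℝ) :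
    R.expect (fun t => ∑ a, w a * F t a) = ∑ a, w a * R.expect fun t => F t a := by
  simp only [expect, Finset.mul_sum]
  rw [Finset.sum_comm]
  simp [mul_left_comm]

end RandAlg

section Score

variable {ι L : Type} [Fintype ι] [DecidableEq ι] {μ : (ι → Bool) → ℝ}

theorem mass_nonneg (hμ : ∀ x, 0 ≤ μ x) (S : Set (ι → Bool)) : 0 ≤ mass μ S :=
  Finset.sum_nonneg fun x _ => Set.indicator_nonneg (fun y _ => hμ y) x

theorem le_mass_of_mem (hμ : ∀ x, 0 ≤ μ x) {S : Set (ι → Bool)} {x : ι → Bool} (hx : x ∈ S) :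
    μ x ≤ mass μ S := by
  rw [← Set.indicator_of_mem hx μ]
  exact Finset.single_le_sum (fun y _ => Set.indicator_nonneg (fun y _ => hμ y) y) (mem_univ x)

theorem mass_setOf (p : (ι → Bool) → Prop) [DecidablePred p] :
    mass μ {x | p x} = ∑ x, μ x * if p x then 1 else 0 := by
  classical
  simp [mass, Set.indicator_apply]

theorem mass_smul (c : ℝ) (S : Set (ι → Bool)) : mass (c • μ) S = c * mass μ S := by
  classical
  simp [mass, Set.indicator_apply, Finset.mul_sum]

/-- Law of total probability over the leaves of `t`. -/
theorem sum_mul_mass_inter_leafSet_div (hμ : ∀ x, 0 ≤ μ x) (t : DTree ι L)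
    (A : Set (ι → Bool)) :
    ∑ x, μ x * (mass μ (t.leafSet x ∩ A) / mass μ (t.leafSet x)) = mass μ A := by
  classical
  have hrow (y : ι → Bool) :
      ∑ x, μ x * ((t.leafSet x ∩ A).indicator μ y / mass μ (t.leafSet x)) =
        A.indicator μ y := by
    have hx (x : ι → Bool) : μ x * ((t.leafSet x ∩ A).indicator μ y / mass μ (t.leafSet x)) =
        (t.leafSet y).indicator μ x * (A.indicator μ y / mass μ (t.leafSet y)) := by
      by_cases hxy : x ∈ t.leafSet y
      · simp [DTree.leafSet_eq_of_mem hxy, Set.indicator_apply, hxy, t.mem_leafSet_self y]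
      · simp [Set.indicator_apply, hxy, DTree.mem_leafSet_comm (y := y)]
    rw [Finset.sum_congr rfl fun x _ => hx x, ← Finset.sum_mul]
    rcases (mass_nonneg hμ (t.leafSet y)).eq_or_lt with h0 | hpos
    · have : μ y = 0 := le_antisymm (h0 ▸ le_mass_of_mem hμ (t.mem_leafSet_self y)) (hμ y)
      simp [Set.indicator_apply, this]
    · rw [← mass, mul_div_cancel₀ _ hpos.ne']
  simp only [mass, Finset.sum_div, Finset.mul_sum]
  rw [Finset.sum_comm]
  exact Finset.sum_congr rfl fun y _ => hrow y

variable (f : (ι → Bool) → Bool)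

noncomputable def optLabel (μ : (ι → Bool) → ℝ) (t : DTree ι L) (x : ι → Bool) : Bool :=
  decide (mass μ (t.leafSet x ∩ {y | f y = false}) ≤ mass μ (t.leafSet x ∩ {y | f y = true}))

theorem optLabel_eq_of_mem {t : DTree ι L} {x y : ι → Bool} (h : y ∈ t.leafSet x) :
    optLabel f μ t y = optLabel f μ t x := by
  rw [optLabel, DTree.leafSet_eq_of_mem h, optLabel]

theorem mass_inter_le_max (t : DTree ι L) (x : ι → Bool) (b : Bool) :
    mass μ (t.leafSet x ∩ {y | f y = b}) ≤
      max (mass μ (t.leafSet x ∩ {y | f y = false})) (mass μ (t.leafSet x ∩ {y | f y = true})) :=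
  by cases b <;> simp

theorem mass_inter_optLabel (t : DTree ι L) (x : ι → Bool) :
    mass μ (t.leafSet x ∩ {y | f y = optLabel f μ t x}) =
      max (mass μ (t.leafSet x ∩ {y | f y = false})) (mass μ (t.leafSet x ∩ {y | f y = true})) := by
  by_cases h : mass μ (t.leafSet x ∩ {y | f y = false}) ≤ mass μ (t.leafSet x ∩ {y | f y = true})
  · simp [optLabel, h]
  · simp [optLabel, h, le_of_not_ge h]

theorem mass_correct_le (hμ : ∀ x, 0 ≤ μ x) (t : DTree ι L) {lab : (ι → Bool) → Bool}
    (hlab : ∀ x, ∀ y ∈ t.leafSet x, lab y = lab x) :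
    mass μ {x | f x = lab x} ≤ ∑ x, μ x * succLeafScore f μ t x := by
  rw [← sum_mul_mass_inter_leafSet_div hμ t]
  refine Finset.sum_le_sum fun x _ => mul_le_mul_of_nonneg_left ?_ (hμ x)
  have hleaf : t.leafSet x ∩ {y | f y = lab y} = t.leafSet x ∩ {y | f y = lab x} := by
    ext y
    simp +contextual [hlab x y]
  rw [hleaf]
  exact div_le_div_of_nonneg_right (mass_inter_le_max f t x _) (mass_nonneg hμ _)

theorem mass_correct_optLabel (hμ : ∀ x, 0 ≤ μ x) (t : DTree ι L) :
    mass μ {x | f x = optLabel f μ t x} = ∑ x, μ x * succLeafScore f μ t x := by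
  rw [← sum_mul_mass_inter_leafSet_div hμ t]
  refine Finset.sum_congr rfl fun x _ => ?_
  have hleaf : t.leafSet x ∩ {y | f y = optLabel f μ t y} =
      t.leafSet x ∩ {y | f y = optLabel f μ t x} := by
    ext y
    simp +contextual [optLabel_eq_of_mem f (x := x) (y := y)]
  rw [hleaf, mass_inter_optLabel, succLeafScore]

theorem succAlgScore_eq_expect (μ : (ι → Bool) → ℝ) (R : RandAlg ι L) :
    succAlgScore f μ R = R.expect fun t => ∑ x, μ x * succLeafScore f μ t x :=
  rfl

theorem succLeafScore_smul {c : ℝ} (hc : 0 < c) (t : DTree ι L) (x : ι → Bool) :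
    succLeafScore f (c • μ) t x = succLeafScore f μ t x := by
  simp only [succLeafScore, mass_smul, ← mul_max_of_nonneg _ _ hc.le]
  exact mul_div_mul_left _ _ hc.ne'

noncomputable def correct (μ : (ι → Bool) → ℝ) (t : DTree ι L) (x : ι → Bool) : ℝ :=
  if f x = optLabel f μ t x then 1 else 0

noncomputable def hitProb (μ : (ι → Bool) → ℝ) (R : RandAlg ι L) (x : ι → Bool) : ℝ :=
  R.expect fun t => correct f μ t x

theorem hitProb_nonneg (μ : (ι → Bool) → ℝ) (R : RandAlg ι L) (x : ι → Bool) :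
    0 ≤ hitProb f μ R x :=
  R.expect_nonneg fun t => by unfold correct; split_ifs <;> norm_num

theorem hitProb_le_one (μ : (ι → Bool) → ℝ) (R : RandAlg ι L) (x : ι → Bool) :
    hitProb f μ R x ≤ 1 := by
  unfold hitProb
  simpa using R.expect_mono (G := fun _ => 1) fun t => by unfold correct; split_ifs <;> norm_num

theorem succAlgScore_eq_sum_hitProb (hμ : ∀ x, 0 ≤ μ x) (R : RandAlg ι L) :
    succAlgScore f μ R = ∑ x, μ x * hitProb f μ R x := by
  have hscore (t : DTree ι L) :
      ∑ x, μ x * succLeafScore f μ t x = ∑ x, μ x * correct f μ t x := by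
    rw [← mass_correct_optLabel f hμ, mass_setOf]
    rfl
  simp only [succAlgScore, hitProb, ← R.expect_sum_mul]
  exact congrArg R.expect (funext hscore)

theorem succAlgScore_smul {c : ℝ} (hc : 0 < c) (R : RandAlg ι L) :
    succAlgScore f (c • μ) R = c * succAlgScore f μ R := by
  simp only [succAlgScore, succLeafScore_smul f hc, Pi.smul_apply, smul_eq_mul, Finset.mul_sum]
  exact Finset.sum_congr rfl fun j _ => Finset.sum_congr rfl fun x _ => by ring

end Score

section Complexity

variable {ι L : Type} [Fintype ι] [DecidableEq ι] (f : (ι → Bool) → Bool)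
  {μ : (ι → Bool) → ℝ}

theorem expCost_eq_expect (μ : (ι → Bool) → ℝ) (R : RandAlg ι L) :
    expCost μ R = R.expect fun t => ∑ x, μ x * (t.cost x : ℝ) :=
  rfl

theorem expCost_nonneg (hμ : ∀ x, 0 ≤ μ x) (R : RandAlg ι L) : 0 ≤ expCost μ R :=
  R.expect_nonneg fun _ => Finset.sum_nonneg fun x _ => mul_nonneg (hμ x) (Nat.cast_nonneg _)

theorem expCost_mono {ν : (ι → Bool) → ℝ} (h : ∀ x, μ x ≤ ν x) (R : RandAlg ι L) :
    expCost μ R ≤ expCost ν R :=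
  R.expect_mono fun _ => Finset.sum_le_sum fun x _ =>
    mul_le_mul_of_nonneg_right (h x) (Nat.cast_nonneg _)

theorem expCost_smul (c : ℝ) (R : RandAlg ι L) : expCost (c • μ) R = c * expCost μ R := by
  simp only [expCost, Pi.smul_apply, smul_eq_mul, Finset.mul_sum]
  exact Finset.sum_congr rfl fun j _ => Finset.sum_congr rfl fun x _ => by ring

noncomputable def queryAllAlg : RandAlg ι Unit :=
  RandAlg.pure (DTree.queryAll (univ : Finset ι).toList)

theorem sum_le_succAlgScore_queryAllAlg (hμ : ∀ x, 0 ≤ μ x) :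
    ∑ x, μ x ≤ succAlgScore f μ queryAllAlg := by
  have hleaf (x : ι → Bool) : (DTree.queryAll (univ : Finset ι).toList).leafSet x = {x} := by
    ext y
    simp [DTree.leafSet_queryAll, funext_iff]
  have := mass_correct_le f hμ (DTree.queryAll (univ : Finset ι).toList) (lab := f)
    fun x y hy => by rw [hleaf x] at hy; rw [hy]
  simpa [mass, succAlgScore_eq_expect, queryAllAlg] using this

theorem expCost_queryAllAlg : expCost μ (queryAllAlg (ι := ι)) = Fintype.card ι * ∑ x, μ x := by
  simp [expCost_eq_expect, queryAllAlg, DTree.cost_queryAll, Finset.mul_sum, mul_comm]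

theorem succRdist_le_expCost (hμ : ∀ x, 0 ≤ μ x) {γ : ℝ} {R : RandAlg ι Unit}
    (hR : γ ≤ succAlgScore f μ R) : succRdist f μ γ ≤ expCost μ R :=
  csInf_le ⟨0, by rintro _ ⟨R, -, rfl⟩; exact expCost_nonneg hμ R⟩ ⟨R, hR, rfl⟩

theorem succRdist_nonneg (hμ : ∀ x, 0 ≤ μ x) (γ : ℝ) : 0 ≤ succRdist f μ γ :=
  Real.sInf_nonneg <| by rintro _ ⟨R, -, rfl⟩; exact expCost_nonneg hμ R

variable {X : Set (ι → Bool)}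

theorem succRdist_le_card (μ : InputDist ι X) {γ : ℝ} (hγ : γ ≤ 1) :
    succRdist f μ.μ γ ≤ Fintype.card ι := by
  have hscore := sum_le_succAlgScore_queryAllAlg f μ.nonneg
  rw [μ.sum_one] at hscore
  simpa [expCost_queryAllAlg, μ.sum_one] using
    succRdist_le_expCost f μ.nonneg (hγ.trans hscore)

theorem succRmax_nonneg (γ : ℝ) : 0 ≤ succRmax X f γ :=
  Real.iSup_nonneg fun μ => succRdist_nonneg f μ.nonneg γ

theorem succRdist_le_succRmax (μ : InputDist ι X) {γ : ℝ} (hγ : γ ≤ 1) :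
    succRdist f μ.μ γ ≤ succRmax X f γ :=
  le_ciSup ⟨_, by rintro _ ⟨μ, rfl⟩; exact succRdist_le_card f μ hγ⟩ μ

theorem exists_alg_le_succRmax_add (μ : InputDist ι X) {γ ε : ℝ} (hγ : γ ≤ 1) (hε : 0 < ε) :
    ∃ R : RandAlg ι Unit, γ ≤ succAlgScore f μ.μ R ∧ expCost μ.μ R ≤ succRmax X f γ + ε := by
  have hne : {c | ∃ R : RandAlg ι Unit, γ ≤ succAlgScore f μ.μ R ∧ expCost μ.μ R = c}.Nonempty :=
    ⟨_, queryAllAlg, hγ.trans (μ.sum_one ▸ sum_le_succAlgScore_queryAllAlg f μ.nonneg), rfl⟩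
  obtain ⟨_, ⟨R, hR, rfl⟩, hlt⟩ := exists_lt_of_csInf_lt hne
    ((succRdist_le_succRmax f μ hγ).trans_lt (lt_add_of_pos_right _ hε))
  exact ⟨R, hR, hlt.le⟩

end Complexity

section Majority

theorem ite_mul_ite_add_ite_mul_ite (v a b c : Bool) :
    ((if v = a then 1 else 0 : ℝ) * (if v = b then 1 else 0) +
        (if a = b then 0 else 1) * (if v = c then 1 else 0)) =
      if v = (if a = b then a else c) then 1 else 0 := by
  cases v <;> cases a <;> cases b <;> cases c <;> norm_num

variable {ι : Type} [Fintype ι] [DecidableEq ι] (f : (ι → Bool) → Bool)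
  (μ μ₂ : (ι → Bool) → ℝ) (t₁ t₂ : DTree ι Unit)

noncomputable def disagree (x : ι → Bool) : ℝ :=
  if optLabel f μ t₁ x = optLabel f μ₂ t₂ x then 0 else 1

theorem disagree_nonneg (x : ι → Bool) : 0 ≤ disagree f μ μ₂ t₁ t₂ x := by
  unfold disagree; split_ifs <;> norm_num

theorem disagree_le_one (x : ι → Bool) : disagree f μ μ₂ t₁ t₂ x ≤ 1 := by
  unfold disagree; split_ifs <;> norm_num

theorem disagree_eq (x : ι → Bool) :
    disagree f μ μ₂ t₁ t₂ x = correct f μ t₁ x + correct f μ₂ t₂ x -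
      2 * (correct f μ t₁ x * correct f μ₂ t₂ x) := by
  unfold disagree correct
  cases optLabel f μ t₁ x <;> cases optLabel f μ₂ t₂ x <;> cases f x <;> norm_num

noncomputable def majorityTree (t₃ : DTree ι Unit) : DTree ι Unit :=
  DTree.thenIf t₁ t₂ t₃ fun y => optLabel f μ t₁ y != optLabel f μ₂ t₂ y

variable (t₃ : DTree ι Unit)

theorem majorityTree_spec (x : ι → Bool) :
    let D := optLabel f μ t₁ x != optLabel f μ₂ t₂ x
    (majorityTree f μ μ₂ t₁ t₂ t₃).cost x =
        t₁.cost x + t₂.cost x + (if D then t₃.cost x else 0) ∧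
      (majorityTree f μ μ₂ t₁ t₂ t₃).leafSet x =
        t₁.leafSet x ∩ t₂.leafSet x ∩ (if D then t₃.leafSet x else Set.univ) :=
  DTree.thenIf_spec fun y hy => by rw [optLabel_eq_of_mem f hy.1, optLabel_eq_of_mem f hy.2]

theorem sum_mul_cost_majorityTree :
    ∑ x, μ x * ((majorityTree f μ μ₂ t₁ t₂ t₃).cost x : ℝ) =
      ∑ x, μ x * (t₁.cost x : ℝ) + ∑ x, μ x * (t₂.cost x : ℝ) +
        ∑ x, μ x * disagree f μ μ₂ t₁ t₂ x * (t₃.cost x : ℝ) := by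
  simp only [← Finset.sum_add_distrib]
  refine Finset.sum_congr rfl fun x _ => ?_
  rw [(majorityTree_spec f μ μ₂ t₁ t₂ t₃ x).1, disagree]
  cases optLabel f μ t₁ x <;> cases optLabel f μ₂ t₂ x <;> simp <;> ring

theorem sum_mul_correct_le_majorityTree (hμ : ∀ x, 0 ≤ μ x) (ν : (ι → Bool) → ℝ) :
    ∑ x, μ x * (correct f μ t₁ x * correct f μ₂ t₂ x +
        disagree f μ μ₂ t₁ t₂ x * correct f ν t₃ x) ≤
      ∑ x, μ x * succLeafScore f μ (majorityTree f μ μ₂ t₁ t₂ t₃) x := by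
  let lab (y : ι → Bool) : Bool :=
    if optLabel f μ t₁ y = optLabel f μ₂ t₂ y then optLabel f μ t₁ y else optLabel f ν t₃ y
  have hlab (x : ι → Bool) : ∀ y ∈ (majorityTree f μ μ₂ t₁ t₂ t₃).leafSet x, lab y = lab x := by
    intro y hy
    rw [(majorityTree_spec f μ μ₂ t₁ t₂ t₃ x).2] at hy
    obtain ⟨⟨hy₁, hy₂⟩, hy₃⟩ := hy
    simp only [lab, optLabel_eq_of_mem f hy₁, optLabel_eq_of_mem f hy₂]
    split_ifs with hD
    · rfl
    · rw [optLabel_eq_of_mem f (by simpa [hD] using hy₃)]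
  have hcorrect (x : ι → Bool) :
      correct f μ t₁ x * correct f μ₂ t₂ x + disagree f μ μ₂ t₁ t₂ x * correct f ν t₃ x =
        if f x = lab x then 1 else 0 := by
    simp only [lab, correct, disagree]
    exact ite_mul_ite_add_ite_mul_ite _ _ _ _
  simp only [hcorrect, ← mass_setOf]
  exact mass_correct_le f hμ _ hlab

noncomputable def majorityAlg (R₁ R₂ : RandAlg ι Unit)
    (R₃ : DTree ι Unit → DTree ι Unit → RandAlg ι Unit) : RandAlg ι Unit :=
  R₁.bind fun t₁ => R₂.bind fun t₂ => (R₃ t₁ t₂).bind fun t₃ =>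
    .pure (majorityTree f μ μ₂ t₁ t₂ t₃)

variable {f μ μ₂} {γ B : ℝ} (R₁ R₂ : RandAlg ι Unit)
  {R₃ : DTree ι Unit → DTree ι Unit → RandAlg ι Unit}

theorem le_succAlgScore_majorityAlg (hμ : ∀ x, 0 ≤ μ x)
    (hs₃ : ∀ t₁ t₂, γ * ∑ x, (μ * disagree f μ μ₂ t₁ t₂) x ≤
      succAlgScore f (μ * disagree f μ μ₂ t₁ t₂) (R₃ t₁ t₂)) :
    ∑ x, μ x * (hitProb f μ R₁ x * hitProb f μ₂ R₂ x + γ * (hitProb f μ R₁ x +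
        hitProb f μ₂ R₂ x - 2 * (hitProb f μ R₁ x * hitProb f μ₂ R₂ x))) ≤
      succAlgScore f μ (majorityAlg f μ μ₂ R₁ R₂ R₃) := by
  rw [succAlgScore_eq_expect]
  simp only [majorityAlg, RandAlg.expect_bind, RandAlg.expect_pure]
  calc _ = R₁.expect fun t₁ => R₂.expect fun t₂ => ∑ x, μ x *
          (correct f μ t₁ x * correct f μ₂ t₂ x + γ * disagree f μ μ₂ t₁ t₂ x) := by
        simp [disagree_eq, RandAlg.expect_sum_mul, hitProb]
    _ ≤ R₁.expect fun t₁ => R₂.expect fun t₂ => (R₃ t₁ t₂).expect fun t₃ => ∑ x, μ x *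
          (correct f μ t₁ x * correct f μ₂ t₂ x +
            disagree f μ μ₂ t₁ t₂ x * correct f (μ * disagree f μ μ₂ t₁ t₂) t₃ x) := by
        refine R₁.expect_mono fun t₁ => R₂.expect_mono fun t₂ => ?_
        have hs := hs₃ t₁ t₂
        rw [succAlgScore_eq_sum_hitProb f (μ := μ * disagree f μ μ₂ t₁ t₂)
          fun x => mul_nonneg (hμ x) (disagree_nonneg f _ _ _ _ x)] at hs
        simp only [mul_add, Finset.sum_add_distrib, RandAlg.expect_add, RandAlg.expect_const,
          ← mul_assoc, RandAlg.expect_sum_mul]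
        refine add_le_add_right (Eq.trans_le ?_ hs) _
        simp only [Pi.mul_apply, Finset.mul_sum]
        exact Finset.sum_congr rfl fun x _ => by ring
    _ ≤ _ := R₁.expect_mono fun t₁ => R₂.expect_mono fun t₂ => (R₃ t₁ t₂).expect_mono
          fun t₃ => sum_mul_correct_le_majorityTree f _ _ t₁ t₂ t₃ hμ _

theorem expCost_majorityAlg_le
    (hc₃ : ∀ t₁ t₂, expCost (μ * disagree f μ μ₂ t₁ t₂) (R₃ t₁ t₂) ≤ B) :
    expCost μ (majorityAlg f μ μ₂ R₁ R₂ R₃) ≤ expCost μ R₁ + expCost μ R₂ + B := by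
  rw [expCost_eq_expect]
  simp only [majorityAlg, RandAlg.expect_bind, RandAlg.expect_pure, sum_mul_cost_majorityTree]
  calc _ ≤ R₁.expect fun t₁ => R₂.expect fun t₂ =>
          ∑ x, μ x * (t₁.cost x : ℝ) + ∑ x, μ x * (t₂.cost x : ℝ) + B := by
        refine R₁.expect_mono fun t₁ => R₂.expect_mono fun t₂ => ?_
        simpa [expCost_eq_expect] using hc₃ t₁ t₂
    _ = _ := by simp [expCost_eq_expect]

end Majority

/-- Eliminating `U` through the constraint leaves a bound affine in `β`, whose worst case
`β = 1 - γ` gives exactly `3γ² - 2γ³`. -/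
theorem three_mul_sq_sub_two_mul_cube_le {γ β U V : ℝ} (hγ : 1 / 2 ≤ γ) (hβ : 0 < β)
    (hβγ : β ≤ 1 - γ) (hV : 0 ≤ V)
    (h : U / (2 * (1 - β)) + V / (2 * β) ≤ 1 - γ) :
    3 * γ ^ 2 - 2 * γ ^ 3 ≤ 1 - β - U + γ * (U + β - V) := by
  have hβ1 : 0 < 1 - β := by linarith
  have hUV : β * U + (1 - β) * V ≤ 2 * (1 - γ) * β * (1 - β) := by
    rw [div_add_div _ _ (by positivity) (by positivity), div_le_iff₀ (by positivity)] at h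
    nlinarith
  have hUV' : (1 - γ) * U + γ * V ≤ 2 * (1 - γ) ^ 2 * (1 - β) := by
    refine le_of_mul_le_mul_left ?_ hβ
    nlinarith [mul_le_mul_of_nonneg_left hUV (by linarith : (0 : ℝ) ≤ 1 - γ)]
  nlinarith [mul_nonneg (mul_nonneg (by linarith : (0 : ℝ) ≤ 1 - γ)
    (by linarith : (0 : ℝ) ≤ 2 * γ - 1)) (by linarith : (0 : ℝ) ≤ 1 - γ - β)]

section Balance

variable {α : Type*} (μ h : α → ℝ) (β : ℝ)

/-- The reweighting of `μ` giving mass `1/2` to where an algorithm with hit probability `h` and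
error `β` is right and `1/2` to where it errs. -/
noncomputable def balance (x : α) : ℝ :=
  μ x * (h x / (2 * (1 - β)) + (1 - h x) / (2 * β))

theorem sum_balance_mul [Fintype α] (g : α → ℝ) :
    ∑ x, balance μ h β x * g x =
      (∑ x, μ x * (h x * g x)) / (2 * (1 - β)) + (∑ x, μ x * ((1 - h x) * g x)) / (2 * β) := by
  simp only [Finset.sum_div, ← Finset.sum_add_distrib, balance]
  exact Finset.sum_congr rfl fun x _ => by ring

variable {μ h β}

theorem sum_balance [Fintype α] (hμ : ∑ x, μ x = 1) (hh : ∑ x, μ x * h x = 1 - β) (hβ : 0 < β)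
    (hβ1 : β < 1) : ∑ x, balance μ h β x = 1 := by
  have hh' : ∑ x, μ x * (1 - h x) = β := by
    simp only [mul_sub, mul_one, Finset.sum_sub_distrib, hμ, hh]
    ring
  have := sum_balance_mul μ h β fun _ => 1
  simp only [mul_one, hh, hh'] at this
  rw [this]
  field_simp [(sub_pos.2 hβ1).ne']
  ring

theorem balance_nonneg {x : α} (hμ : 0 ≤ μ x) (h0 : 0 ≤ h x) (h1 : h x ≤ 1) (hβ : 0 < β)
    (hβ1 : β < 1) : 0 ≤ balance μ h β x :=
  mul_nonneg hμ (add_nonneg (div_nonneg h0 (by linarith)) (div_nonneg (by linarith) (by linarith)))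

theorem le_two_mul_balance {x : α} (hμ : 0 ≤ μ x) (h0 : 0 ≤ h x) (h1 : h x ≤ 1) (hβ : 0 < β)
    (hβ1 : β < 1) : μ x ≤ 2 * balance μ h β x := by
  have : h x / 2 + (1 - h x) / 2 ≤ h x / (2 * (1 - β)) + (1 - h x) / (2 * β) :=
    add_le_add (div_le_div_of_nonneg_left h0 (by linarith) (by linarith))
      (div_le_div_of_nonneg_left (by linarith) (by linarith) (by linarith))
  unfold balance
  nlinarith

theorem three_mul_sq_sub_two_mul_cube_le_sum [Fintype α] {h₂ : α → ℝ} {γ : ℝ} (hγ : 1 / 2 ≤ γ)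
    (hμ : ∀ x, 0 ≤ μ x) (hμ1 : ∑ x, μ x = 1) (h1 : ∀ x, h x ≤ 1) (h₂1 : ∀ x, h₂ x ≤ 1)
    (hh : ∑ x, μ x * h x = 1 - β) (hβ : 0 < β) (hβγ : β ≤ 1 - γ)
    (hbal : ∑ x, balance μ h β x = 1) (h₂γ : γ ≤ ∑ x, balance μ h β x * h₂ x) :
    3 * γ ^ 2 - 2 * γ ^ 3 ≤
      ∑ x, μ x * (h x * h₂ x + γ * (h x + h₂ x - 2 * (h x * h₂ x))) := by
  set U := ∑ x, μ x * (h x * (1 - h₂ x))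
  set V := ∑ x, μ x * ((1 - h x) * (1 - h₂ x))
  have hV : 0 ≤ V := Finset.sum_nonneg fun x _ =>
    mul_nonneg (hμ x) (mul_nonneg (by linarith [h1 x]) (by linarith [h₂1 x]))
  have hUV : U / (2 * (1 - β)) + V / (2 * β) ≤ 1 - γ := by
    rw [← sum_balance_mul]
    simp only [mul_sub, mul_one, Finset.sum_sub_distrib]
    linarith
  have hexpand (x : α) :
      μ x * (h x * h₂ x + γ * (h x + h₂ x - 2 * (h x * h₂ x))) =
        μ x * h x - μ x * (h x * (1 - h₂ x)) + γ * (μ x * (h x * (1 - h₂ x)) +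
          μ x - μ x * h x - μ x * ((1 - h x) * (1 - h₂ x))) := by
    ring
  simp only [hexpand, Finset.sum_add_distrib, Finset.sum_sub_distrib, ← Finset.mul_sum, hμ1, hh]
  linarith [three_mul_sq_sub_two_mul_cube_le hγ hβ hβγ hV hUV]

end Balance

section Boosting

variable {ι : Type} [Fintype ι] [DecidableEq ι] {X : Set (ι → Bool)} {f : (ι → Bool) → Bool}
  {γ B : ℝ}

variable (X f) in
/-- A witnessed form of `R̄̄_γ(f) ≤ B`. -/
def DistSolvable (γ B : ℝ) : Prop :=
  ∀ μ : InputDist ι X, ∃ R : RandAlg ι Unit, γ ≤ succAlgScore f μ.μ R ∧ expCost μ.μ R ≤ B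

/-- Score and expected cost are both homogeneous of degree one in the weight. -/
theorem DistSolvable.exists_alg_of_weight (h : DistSolvable X f γ B) {ν : (ι → Bool) → ℝ}
    (hν : ∀ x, 0 ≤ ν x) (hνX : ∀ x ∉ X, ν x = 0) :
    ∃ R : RandAlg ι Unit, γ * ∑ x, ν x ≤ succAlgScore f ν R ∧ expCost ν R ≤ B * ∑ x, ν x := by
  rcases (Finset.sum_nonneg fun x _ => hν x).eq_or_lt with h0 | hpos
  · have hν0 (x : ι → Bool) : ν x = 0 :=
      (Finset.sum_eq_zero_iff_of_nonneg fun x _ => hν x).1 h0.symm x (mem_univ x)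
    refine ⟨queryAllAlg, ?_, ?_⟩ <;> simp [succAlgScore, expCost, hν0]
  · set Z := ∑ x, ν x
    let μ : InputDist ι X :=
      { μ := Z⁻¹ • ν
        nonneg := fun x => mul_nonneg (inv_nonneg.2 hpos.le) (hν x)
        sum_one := by simp [← Finset.mul_sum, Z, hpos.ne']
        supp := fun x hx => by simp [hνX x hx] }
    have hνμ : ν = Z • μ.μ := by ext x; simp [μ, hpos.ne']
    obtain ⟨R, hs, hc⟩ := h μ
    refine ⟨R, ?_, ?_⟩
    · rw [hνμ, succAlgScore_smul f hpos, mul_comm]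
      exact mul_le_mul_of_nonneg_left hs hpos.le
    · rw [hνμ, expCost_smul, mul_comm B]
      exact mul_le_mul_of_nonneg_left hc hpos.le

theorem DistSolvable.nonneg (h : DistSolvable X f γ B) (μ : InputDist ι X) : 0 ≤ B := by
  obtain ⟨R, -, hc⟩ := h μ
  exact (expCost_nonneg μ.nonneg R).trans hc

/-- The third algorithm is run against `μ` restricted to the disagreement region of the first
two trees, on which it again has score `γ`. -/
theorem DistSolvable.exists_majorityAlg (h : DistSolvable X f γ B) (μ : InputDist ι X)
    (μ₂ : (ι → Bool) → ℝ) (R₁ R₂ : RandAlg ι Unit) :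
    ∃ R : RandAlg ι Unit,
      ∑ x, μ.μ x * (hitProb f μ.μ R₁ x * hitProb f μ₂ R₂ x + γ * (hitProb f μ.μ R₁ x +
          hitProb f μ₂ R₂ x - 2 * (hitProb f μ.μ R₁ x * hitProb f μ₂ R₂ x))) ≤
        succAlgScore f μ.μ R ∧
      expCost μ.μ R ≤ expCost μ.μ R₁ + expCost μ.μ R₂ + B := by
  have hν (t₁ t₂ : DTree ι Unit) (x : ι → Bool) : 0 ≤ (μ.μ * disagree f μ.μ μ₂ t₁ t₂) x :=
    mul_nonneg (μ.nonneg x) (disagree_nonneg f _ _ t₁ t₂ x)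
  choose R₃ hs₃ hc₃ using fun t₁ t₂ =>
    h.exists_alg_of_weight (hν t₁ t₂) fun x hx => by simp [μ.supp x hx]
  refine ⟨majorityAlg f μ.μ μ₂ R₁ R₂ R₃, le_succAlgScore_majorityAlg R₁ R₂ μ.nonneg hs₃,
    expCost_majorityAlg_le R₁ R₂ fun t₁ t₂ => (hc₃ t₁ t₂).trans ?_⟩
  refine mul_le_of_le_one_right (h.nonneg μ) (μ.sum_one ▸ Finset.sum_le_sum fun x _ => ?_)
  exact mul_le_of_le_one_right (μ.nonneg x) (disagree_le_one f _ _ t₁ t₂ x)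

theorem DistSolvable.boost (h : DistSolvable X f γ B) (hγ : 1 / 2 ≤ γ) :
    DistSolvable X f (3 * γ ^ 2 - 2 * γ ^ 3) (4 * B) := by
  intro μ
  have hB := h.nonneg μ
  obtain ⟨R₁, hs₁, hc₁⟩ := h μ
  rw [succAlgScore_eq_sum_hitProb f μ.nonneg] at hs₁
  have h₁0 := hitProb_nonneg f μ.μ R₁
  have h₁1 := hitProb_le_one f μ.μ R₁
  set β := 1 - ∑ x, μ.μ x * hitProb f μ.μ R₁ x
  have hβ0 : 0 ≤ β := by
    have := Finset.sum_le_sum fun x (_ : x ∈ univ) => mul_le_of_le_one_right (μ.nonneg x) (h₁1 x)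
    rw [μ.sum_one] at this
    linarith
  rcases hβ0.eq_or_lt with hβ | hβ
  · refine ⟨R₁, ?_, by linarith⟩
    rw [succAlgScore_eq_sum_hitProb f μ.nonneg]
    nlinarith [mul_nonneg (sq_nonneg (1 - γ)) (by linarith : (0 : ℝ) ≤ 1 + 2 * γ)]
  have hβ1 : β < 1 := by linarith
  set ν₂ := balance μ.μ (hitProb f μ.μ R₁) β
  have hν₂0 (x : ι → Bool) : 0 ≤ ν₂ x := balance_nonneg (μ.nonneg x) (h₁0 x) (h₁1 x) hβ hβ1
  obtain ⟨R₂, hs₂, hc₂⟩ := h.exists_alg_of_weight hν₂0 fun x hx => by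
    simp [ν₂, balance, μ.supp x hx]
  have hν₂ : ∑ x, ν₂ x = 1 := sum_balance μ.sum_one (by ring) hβ hβ1
  rw [hν₂, mul_one, succAlgScore_eq_sum_hitProb f hν₂0] at hs₂
  rw [hν₂, mul_one] at hc₂
  obtain ⟨R, hs, hc⟩ := h.exists_majorityAlg μ ν₂ R₁ R₂
  refine ⟨R, (three_mul_sq_sub_two_mul_cube_le_sum hγ μ.nonneg μ.sum_one h₁1
    (hitProb_le_one f ν₂ R₂) (by ring) hβ (by linarith) hν₂ hs₂).trans hs, ?_⟩
  have hμν₂ (x : ι → Bool) : μ.μ x ≤ 2 * ν₂ x :=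
    le_two_mul_balance (μ.nonneg x) (h₁0 x) (h₁1 x) hβ hβ1
  linarith [(expCost_mono hμν₂ R₂).trans_eq (expCost_smul 2 R₂)]

end Boosting

/-- **Boosting for maximum distributional complexity**:
`R̄̄_{3γ²−2γ³}(f) ≤ 4·R̄̄_γ(f)` for every `γ ∈ [1/2,1]` (success-probability score). -/
theorem boosting_maximum_distributional
    (m : ℕ) (X : Set (Fin m → Bool)) (f : (Fin m → Bool) → Bool)
    (γ : ℝ) (h1 : 1 / 2 ≤ γ) (h2 : γ ≤ 1) :
    succRmax X f (3 * γ ^ 2 - 2 * γ ^ 3) ≤ 4 * succRmax X f γ := by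
  refine Real.iSup_le (fun μ => le_of_forall_pos_le_add fun ε hε => ?_)
    (by linarith [succRmax_nonneg f (X := X) γ])
  have hsolv : DistSolvable X f γ (succRmax X f γ + ε / 4) := fun ν =>
    exists_alg_le_succRmax_add f ν h2 (by positivity)
  obtain ⟨R, hs, hc⟩ := hsolv.boost h1 μ
  linarith [succRdist_le_expCost f μ.nonneg hs]
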